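/- arXiv:1711.06757 — 2 statements merged into one kernel-verified Lean document; each statement's English description precedes it below -/
import Mathlib

section
/- Let (Φ, Ψ) be a complementary pair of continuous strictly increasing Young functions, suppose Ψ̃(x) := Ψ(√x) is a Young function, and let Φ̃ be the complementary Young function of Ψ̃. Then for every x > 0: Φ(x) ≤ Φ̃(2x²/Φ(x)) and Φ̃(x²/(4Φ(x))) ≤ Φ(x). -/
/-!
If `g` is convex on `[0, ∞)` with `g 0 = 0` and `g ≥ 0`, then `g t / t` is nondecreasing, so for
`0 ≤ c ≤ g t₀` every term `t * (c / t₀) - g t` in the supremum defining the complementary function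
of `g` at `c / t₀` is at most `c`: for `t ≤ t₀` because `g t ≥ 0`, for `t ≥ t₀` because
`t * c / t₀ ≤ g t`.

With `g = Φ`, `t₀ = x`, `c = Φ x` this gives `Ψ (Φ x / x) ≤ Φ x`, and Young's inequality for
`(Ψ̃, Φ̃)` at `t = (Φ x / x)²` gives the first bound. With `g = Ψ̃`, `t₀ = (2 Φ x / x)²`, `c = Φ x`
it gives the second, since `Ψ̃ t₀ = Ψ (2 Φ x / x) ≥ x * (2 Φ x / x) - Φ x = Φ x` by Young's inequality.
-/

open Set Real

def IsYoungComplement (Φ Ψ : ℝ → ℝ) : Prop :=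
  ∀ y ≥ (0:ℝ), IsLUB {z : ℝ | ∃ x ≥ (0:ℝ), z = x * y - Φ x} (Ψ y)

lemma ConvexOn.div_le_div_of_map_zero {f : ℝ → ℝ} (hf : ConvexOn ℝ (Ici 0) f) (hf0 : f 0 = 0)
    {a b : ℝ} (ha : 0 < a) (hab : a ≤ b) : f a / a ≤ f b / b := by
  have hb : 0 < b := ha.trans_le hab
  simpa [hf0] using hf.secant_mono self_mem_Ici ha.le hb.le ha.ne' hb.ne' hab

namespace IsYoungComplement

variable {Φ Ψ : ℝ → ℝ}

lemma mul_sub_le (h : IsYoungComplement Φ Ψ) {x y : ℝ} (hx : 0 ≤ x) (hy : 0 ≤ y) :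
    x * y - Φ x ≤ Ψ y :=
  (h y hy).1 ⟨x, hx, rfl⟩

lemma le_of_forall_mul_sub_le (h : IsYoungComplement Φ Ψ) {y c : ℝ} (hy : 0 ≤ y)
    (hc : ∀ x ≥ 0, x * y - Φ x ≤ c) : Ψ y ≤ c :=
  (h y hy).2 <| by
    rintro _ ⟨x, hx, rfl⟩
    exact hc x hx

lemma nonneg (h : IsYoungComplement Φ Ψ) (hΦ0 : Φ 0 = 0) {y : ℝ} (hy : 0 ≤ y) : 0 ≤ Ψ y := by
  simpa [hΦ0] using h.mul_sub_le le_rfl hy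

lemma map_zero (h : IsYoungComplement Φ Ψ) (hΦ0 : Φ 0 = 0) (hΦ : ∀ x ≥ 0, 0 ≤ Φ x) :
    Ψ 0 = 0 :=
  le_antisymm (h.le_of_forall_mul_sub_le le_rfl fun x hx => by simpa using hΦ x hx)
    (h.nonneg hΦ0 le_rfl)

lemma apply_div_le (h : IsYoungComplement Φ Ψ) (hΦ : ConvexOn ℝ (Ici 0) Φ) (hΦ0 : Φ 0 = 0)
    (hΦnn : ∀ x ≥ 0, 0 ≤ Φ x) {c t₀ : ℝ} (ht₀ : 0 < t₀) (hc : 0 ≤ c) (hcΦ : c ≤ Φ t₀) :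
    Ψ (c / t₀) ≤ c := by
  refine h.le_of_forall_mul_sub_le (by positivity) fun t ht => ?_
  rcases le_or_gt t t₀ with htt₀ | htt₀
  · have : t * (c / t₀) ≤ c := by
      rw [mul_div_assoc', div_le_iff₀ ht₀]
      nlinarith
    linarith [hΦnn t ht]
  · have hslope := hΦ.div_le_div_of_map_zero hΦ0 ht₀ htt₀.le
    have : t * (c / t₀) ≤ Φ t :=
      calc t * (c / t₀) ≤ t * (Φ t / t) :=
            mul_le_mul_of_nonneg_left ((div_le_div_of_nonneg_right hcΦ ht₀.le).trans hslope) ht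
        _ = Φ t := mul_div_cancel₀ _ (ht₀.trans htt₀).ne'
    linarith

end IsYoungComplement

theorem young_square_root_comparison_general
    (Φ Ψ Ψt Φt : ℝ → ℝ)
    (hΦ0 : Φ 0 = 0)
    (hΦconv : ConvexOn ℝ (Set.Ici 0) Φ)
    (hΦpos : ∀ x > (0:ℝ), 0 < Φ x)
    (hcompl : ∀ y ≥ (0:ℝ), IsLUB {z : ℝ | ∃ x ≥ (0:ℝ), z = x * y - Φ x} (Ψ y))
    (hΨt : ∀ x ≥ (0:ℝ), Ψt x = Ψ (Real.sqrt x))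
    (hΨtconv : ConvexOn ℝ (Set.Ici 0) Ψt)
    (hΦt : ∀ y ≥ (0:ℝ), IsLUB {z : ℝ | ∃ x ≥ (0:ℝ), z = x * y - Ψt x} (Φt y)) :
    ∀ x > (0:ℝ), Φ x ≤ Φt (2 * x ^ 2 / Φ x) ∧ Φt (x ^ 2 / (4 * Φ x)) ≤ Φ x := by
  have hΦΨ : IsYoungComplement Φ Ψ := hcompl
  have hΨΦt : IsYoungComplement Ψt Φt := hΦt
  have hΦnn : ∀ a ≥ 0, 0 ≤ Φ a := fun a ha =>
    ha.eq_or_lt.elim (fun h => h ▸ hΦ0.ge) fun h => (hΦpos a h).le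
  have hΨtnn : ∀ t ≥ 0, 0 ≤ Ψt t := fun t ht =>
    (hΨt t ht).symm ▸ hΦΨ.nonneg hΦ0 (sqrt_nonneg t)
  have hΨt0 : Ψt 0 = 0 := by rw [hΨt 0 le_rfl, sqrt_zero, hΦΨ.map_zero hΦ0 hΦnn]
  intro x hx
  have hΦx := hΦpos x hx
  constructor
  · have hΨ : Ψ (Φ x / x) ≤ Φ x := hΦΨ.apply_div_le hΦconv hΦ0 hΦnn hx hΦx.le le_rfl
    have hyoung := hΨΦt.mul_sub_le (sq_nonneg (Φ x / x)) (by positivity : 0 ≤ 2 * x ^ 2 / Φ x)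
    rw [hΨt _ (sq_nonneg _), sqrt_sq (by positivity)] at hyoung
    have : (Φ x / x) ^ 2 * (2 * x ^ 2 / Φ x) = 2 * Φ x := by field_simp
    linarith
  · have hΨ : Φ x ≤ Ψt ((2 * Φ x / x) ^ 2) := by
      rw [hΨt _ (sq_nonneg _), sqrt_sq (by positivity)]
      have hyoung := hΦΨ.mul_sub_le hx.le (by positivity : 0 ≤ 2 * Φ x / x)
      rw [mul_div_cancel₀ _ hx.ne'] at hyoung
      linarith
    have := hΨΦt.apply_div_le hΨtconv hΨt0 hΨtnn (by positivity) hΦx.le hΨ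
    convert this using 2
    field_simp
    ring

/-- If `(Φ, Ψ)` is a complementary pair of continuous strictly increasing
Young functions, `Ψ̃ x = Ψ (√x)` is a Young function and `Φ̃` is its complementary
Young function, then `Φ x ≤ Φ̃ (2x²/Φ x)` and `Φ̃ (x²/(4 Φ x)) ≤ Φ x` for all `x > 0`. -/
theorem young_square_root_comparison
    (Φ Ψ Ψt Φt : ℝ → ℝ)
    (hΦ0 : Φ 0 = 0)
    (hΦconv : ConvexOn ℝ (Set.Ici 0) Φ)
    (hΦtop : Filter.Tendsto Φ Filter.atTop Filter.atTop)
    (hΦcont : ContinuousOn Φ (Set.Ici 0))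
    (hΦmono : StrictMonoOn Φ (Set.Ici 0))
    (hΨcont : ContinuousOn Ψ (Set.Ici 0))
    (hΨmono : StrictMonoOn Ψ (Set.Ici 0))
    (hΦpos : ∀ x > (0:ℝ), 0 < Φ x)
    (hΨpos : ∀ x > (0:ℝ), 0 < Ψ x)
    (hcompl : ∀ y ≥ (0:ℝ), IsLUB {z : ℝ | ∃ x ≥ (0:ℝ), z = x * y - Φ x} (Ψ y))
    (hΨt : ∀ x ≥ (0:ℝ), Ψt x = Ψ (Real.sqrt x))
    (hΨtconv : ConvexOn ℝ (Set.Ici 0) Ψt)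
    (hΦt : ∀ y ≥ (0:ℝ), IsLUB {z : ℝ | ∃ x ≥ (0:ℝ), z = x * y - Ψt x} (Φt y)) :
    ∀ x > (0:ℝ), Φ x ≤ Φt (2 * x ^ 2 / Φ x) ∧ Φt (x ^ 2 / (4 * Φ x)) ≤ Φ x :=
  young_square_root_comparison_general Φ Ψ Ψt Φt hΦ0 hΦconv hΦpos hcompl hΨt hΨtconv hΦt
end

section
/- Let (Φ, Ψ) be a complementary pair of continuous strictly increasing Young functions with Φ̃(x) := Φ(√x) a Young function whose complementary function is Ψ̃. If f : G → (0,∞) is measurable with ∫_G Ψ(f(t)) dt < ∞, then ∫_G Ψ̃(f(t)²/(4Ψ(f(t)))) dt ≤ ∫_G Ψ(f(t)) dt < ∞; in particular f²/Ψ(f) belongs to the Orlicz space L^{Ψ̃}(G). -/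
open MeasureTheory

/-- If `(Φ, Ψ)` is a complementary pair of continuous strictly increasing
Young functions, `Φ̃ x = Φ (√x)` is a Young function with complementary function `Ψ̃`,
and `f : G → (0,∞)` is measurable with `∫ Ψ (f t) dt < ∞`, then
`∫ Ψ̃ (f t ^ 2 / (4 Ψ (f t))) dt ≤ ∫ Ψ (f t) dt < ∞`; in particular `f² / Ψ ∘ f`
belongs to the Orlicz space `L^{Ψ̃}(G)`. -/
theorem sq_over_psi_in_orlicz
    {G : Type*} [MeasurableSpace G] (μ : Measure G)
    (Φ Ψ Φt Ψt : ℝ → ℝ)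
    (hΦ0 : Φ 0 = 0)
    (hΦconv : ConvexOn ℝ (Set.Ici 0) Φ)
    (hΦtop : Filter.Tendsto Φ Filter.atTop Filter.atTop)
    (hΦcont : ContinuousOn Φ (Set.Ici 0))
    (hΦmono : StrictMonoOn Φ (Set.Ici 0))
    (hΨcont : ContinuousOn Ψ (Set.Ici 0))
    (hΨmono : StrictMonoOn Ψ (Set.Ici 0))
    (hcompl : ∀ y ≥ (0:ℝ), IsLUB {z : ℝ | ∃ x ≥ (0:ℝ), z = x * y - Φ x} (Ψ y))
    (hΦt : ∀ x ≥ (0:ℝ), Φt x = Φ (Real.sqrt x))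
    (hΦtconv : ConvexOn ℝ (Set.Ici 0) Φt)
    (hΨt : ∀ y ≥ (0:ℝ), IsLUB {z : ℝ | ∃ x ≥ (0:ℝ), z = x * y - Φt x} (Ψt y))
    (f : G → ℝ)
    (hf : Measurable f)
    (hfpos : ∀ t, 0 < f t)
    (hfin : ∫⁻ t, ENNReal.ofReal (Ψ (f t)) ∂μ < ⊤) :
    (∫⁻ t, ENNReal.ofReal (Ψt (f t ^ 2 / (4 * Ψ (f t)))) ∂μ
        ≤ ∫⁻ t, ENNReal.ofReal (Ψ (f t)) ∂μ) ∧
    (∃ c > (0:ℝ), ∫⁻ t, ENNReal.ofReal (Ψt (c * |f t ^ 2 / Ψ (f t)|)) ∂μ < ⊤) := by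
  -- basic facts
  have hΦnonneg : ∀ u : ℝ, 0 ≤ u → 0 ≤ Φ u := by
    intro u hu
    have := hΦmono.monotoneOn (Set.mem_Ici.2 le_rfl) (Set.mem_Ici.2 hu) hu
    linarith [hΦ0 ▸ this]
  have hΨ0 : Ψ 0 = 0 := by
    have h := hcompl 0 le_rfl
    have h1 : (0:ℝ) ∈ {z : ℝ | ∃ x ≥ (0:ℝ), z = x * 0 - Φ x} := ⟨0, le_rfl, by simp [hΦ0]⟩
    have h2 : (0:ℝ) ∈ upperBounds {z : ℝ | ∃ x ≥ (0:ℝ), z = x * 0 - Φ x} := by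
      rintro z ⟨x, hx, rfl⟩
      have := hΦnonneg x hx
      linarith
    exact le_antisymm (h.2 h2) (h.1 h1)
  have hΨpos : ∀ x : ℝ, 0 < x → 0 < Ψ x := by
    intro x hx
    have := hΨmono (Set.mem_Ici.2 le_rfl) (Set.mem_Ici.2 hx.le) hx
    linarith [hΨ0 ▸ this]
  have young : ∀ u x : ℝ, 0 ≤ u → 0 ≤ x → u * x - Φ u ≤ Ψ x := by
    intro u x hu hx
    exact (hcompl x hx).1 ⟨u, hu, rfl⟩
  have hΦt0 : Φt 0 = 0 := by
    rw [hΦt 0 le_rfl, Real.sqrt_zero, hΦ0]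
  have scale : ∀ u : ℝ, 0 ≤ u → ∀ l : ℝ, 0 ≤ l → l ≤ 1 → Φ (l * u) ≤ l ^ 2 * Φ u := by
    intro u hu l hl0 hl1
    have h1 : Φt ((l * u) ^ 2) = Φ (l * u) := by
      rw [hΦt _ (sq_nonneg _), Real.sqrt_sq (by positivity)]
    have h2 : Φt (u ^ 2) = Φ u := by
      rw [hΦt _ (sq_nonneg _), Real.sqrt_sq hu]
    have hc := hΦtconv.2 (Set.mem_Ici.2 (sq_nonneg u)) (Set.mem_Ici.2 le_rfl)
      (by positivity : (0:ℝ) ≤ l ^ 2) (by nlinarith : (0:ℝ) ≤ 1 - l ^ 2) (by ring)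
    simp only [smul_eq_mul, mul_zero, add_zero, hΦt0] at hc
    have he : l ^ 2 * u ^ 2 = (l * u) ^ 2 := by ring
    rw [he, h1, h2] at hc
    exact hc
  -- key pointwise inequality
  have key : ∀ t : G, Ψt (f t ^ 2 / (4 * Ψ (f t))) ≤ Ψ (f t) := by
    intro t
    set x := f t with hxdef
    have hx : 0 < x := hfpos t
    set b := Ψ x with hbdef
    have hb : 0 < b := hΨpos x hx
    have hy : 0 ≤ x ^ 2 / (4 * b) := by positivity
    refine (hΨt _ hy).2 ?_
    rintro z ⟨s, hs, rfl⟩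
    set u := Real.sqrt s with hudef
    have hu : 0 ≤ u := Real.sqrt_nonneg s
    have hus : u ^ 2 = s := Real.sq_sqrt hs
    have hΦts : Φt s = Φ u := hΦt s hs
    rw [hΦts, ← hus]
    have hΦu : 0 ≤ Φ u := hΦnonneg u hu
    have keyeq : u ^ 2 * (x ^ 2 / (4 * b)) = (u * x) ^ 2 / (4 * b) := by ring
    rcases le_or_gt (u * x) (2 * b) with hcase | hcase
    · have h1 : (u * x) ^ 2 ≤ b * (4 * b) := by nlinarith [mul_nonneg hu hx.le]
      have : u ^ 2 * (x ^ 2 / (4 * b)) ≤ b := by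
        rw [keyeq, div_le_iff₀ (by positivity)]; exact h1
      linarith
    · set l := 2 * b / (u * x) with hldef
      have hux : 0 < u * x := lt_trans (by positivity) hcase
      have hl0 : 0 < l := by positivity
      have hl1 : l ≤ 1 := by
        rw [div_le_one hux]; linarith
      have hY := young (l * u) x (by positivity) hx.le
      have hS := scale u hu l hl0.le hl1
      have hlux : l * u * x = 2 * b := by
        rw [mul_assoc, hldef, div_mul_cancel₀ _ hux.ne']
      have h3 : b ≤ l ^ 2 * Φ u := by nlinarith
      have h4 : l ^ 2 * (u * x) ^ 2 = 4 * b ^ 2 := by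
        rw [hldef, div_pow, div_mul_cancel₀ _ (pow_ne_zero 2 hux.ne')]; ring
      have h5 : (u * x) ^ 2 ≤ 4 * b * Φ u := by nlinarith
      have h6 : u ^ 2 * (x ^ 2 / (4 * b)) ≤ Φ u := by
        rw [keyeq, div_le_iff₀ (by positivity)]; nlinarith
      linarith
  have part1 : (∫⁻ t, ENNReal.ofReal (Ψt (f t ^ 2 / (4 * Ψ (f t)))) ∂μ
        ≤ ∫⁻ t, ENNReal.ofReal (Ψ (f t)) ∂μ) :=
    lintegral_mono fun t => ENNReal.ofReal_le_ofReal (key t)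
  refine ⟨part1, 1/4, by norm_num, ?_⟩
  have heq : ∀ t : G, (1/4 : ℝ) * |f t ^ 2 / Ψ (f t)| = f t ^ 2 / (4 * Ψ (f t)) := by
    intro t
    have hb := hΨpos (f t) (hfpos t)
    rw [abs_of_pos (div_pos (pow_pos (hfpos t) 2) hb)]
    field_simp
  calc ∫⁻ t, ENNReal.ofReal (Ψt ((1/4 : ℝ) * |f t ^ 2 / Ψ (f t)|)) ∂μ
      = ∫⁻ t, ENNReal.ofReal (Ψt (f t ^ 2 / (4 * Ψ (f t)))) ∂μ := by
        simp only [heq]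
    _ ≤ ∫⁻ t, ENNReal.ofReal (Ψ (f t)) ∂μ := part1
    _ < ⊤ := hfin
end
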